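/- Let H be a commutative bialgebra and A a commutative right H-comodule algebra. For an invertible grouplike element X of A⊗H, the relative Hopf module A^X (A with the coaction ρ_X(a) = Xa) is trivial in Pic^H(A), i.e. A^X ≅ A as relative Hopf modules, if and only if X = d(a) = a^{-1}a_{[0]}⊗a_{[1]} for some invertible a ∈ A. -/

import Mathlib

open TensorProduct

universe u

/-- A commutative right `H`-comodule algebra: a commutative `k`-algebra `A` together with
a coassociative counital coaction `ρ : A → A ⊗ H` which is an algebra map. -/
structure ComodAlg (k H A : Type u) [CommRing k] [Ring H] [Bialgebra k H]
    [CommRing A] [Algebra k A] : Type u where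
  ρ : A →ₐ[k] A ⊗[k] H
  counit_comp : ∀ a : A,
    (TensorProduct.rid k A) ((LinearMap.lTensor A (Coalgebra.counit (R := k) (A := H))) (ρ a)) = a
  coassoc : ∀ a : A,
    (LinearMap.lTensor A (Coalgebra.comul (R := k) (A := H))) (ρ a)
      = (TensorProduct.assoc k A H H) ((LinearMap.rTensor H ρ.toLinearMap) (ρ a))

namespace ComodAlg

variable {k H A : Type u} [CommRing k] [Ring H] [Bialgebra k H]
  [CommRing A] [Algebra k A] (c : ComodAlg k H A)

/-- The subset of coinvariant elements `B = A^{co H}`. -/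
def coinvSet : Set A := {a : A | c.ρ a = a ⊗ₜ[k] 1}

/-- The coinvariants `B = A^{co H}` as a subalgebra of `A`. -/
def coinvAlg : Subalgebra k A where
  carrier := c.coinvSet
  mul_mem' {a} {b} ha hb := by
    simp only [coinvSet, Set.mem_setOf_eq] at *
    rw [map_mul, ha, hb, Algebra.TensorProduct.tmul_mul_tmul, mul_one]
  add_mem' {a} {b} ha hb := by
    simp only [coinvSet, Set.mem_setOf_eq] at *
    rw [map_add, ha, hb, ← add_tmul]
  algebraMap_mem' r := by
    simp only [coinvSet, Set.mem_setOf_eq, AlgHom.commutes,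
      Algebra.TensorProduct.algebraMap_apply]

end ComodAlg

namespace ComodAlg

variable {k H A : Type u} [CommRing k] [CommRing H] [Bialgebra k H]
  [CommRing A] [Algebra k A] (c : ComodAlg k H A)

/-- `Σ aᵢ ⊗ (hᵢ)₍₁₎ ⊗ (hᵢ)₍₂₎`, the comultiplication of the coring `A ⊗ H` applied to `x`,
written in `(A ⊗ H) ⊗ H` via the canonical identification `(A ⊗ H) ⊗_A (A ⊗ H) ≅ A ⊗ H ⊗ H`. -/
noncomputable def coact2 : A ⊗[k] H →ₗ[k] (A ⊗[k] H) ⊗[k] H :=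
  (TensorProduct.assoc k A H H).symm.toLinearMap ∘ₗ
    LinearMap.lTensor A (Coalgebra.comul (R := k) (A := H))

/-- `Σ_{i,j} aᵢ (a_j)₍₀₎ ⊗ hᵢ (a_j)₍₁₎ ⊗ h_j`, the image of `x ⊗_A x` under the canonical
identification `(A ⊗ H) ⊗_A (A ⊗ H) ≅ A ⊗ H ⊗ H`. -/
noncomputable def sqRHS (x : A ⊗[k] H) : (A ⊗[k] H) ⊗[k] H :=
  (LinearMap.rTensor H (LinearMap.mulLeft k x)) ((LinearMap.rTensor H c.ρ.toLinearMap) x)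

/-- `x` is a grouplike element of the `A`-coring `A ⊗ H`; equivalently, `x` is a
normalized Harrison 1-cocycle. -/
noncomputable def IsGrouplike (x : A ⊗[k] H) : Prop :=
  coact2 x = c.sqRHS x ∧
    (TensorProduct.rid k A) ((LinearMap.lTensor A (Coalgebra.counit (R := k) (A := H))) x) = 1

/-- The map `d : 𝔾ₘ(A) → Gⁱ(A ⊗ H)`, `d(a) = a⁻¹ a₍₀₎ ⊗ a₍₁₎`. -/
noncomputable def d (a : Aˣ) : A ⊗[k] H := (((↑a⁻¹ : A) ⊗ₜ[k] (1 : H)) : A ⊗[k] H) * c.ρ ↑a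

end ComodAlg

/-! Every `A`-linear automorphism of `A` is multiplication by a unit `a`. Since `ρ` is
multiplicative, `b ↦ ab` is colinear `A^X → A` iff `ρ(a) = (a ⊗ 1) X`, i.e. `X = d(a)`. -/

theorem LinearEquiv.smulOfUnit_surjective {R : Type*} [CommSemiring R] :
    Function.Surjective (LinearEquiv.smulOfUnit : Rˣ → R ≃ₗ[R] R) := by
  intro f
  have hunit : f 1 * f.symm 1 = 1 := by
    simpa [mul_comm] using (f.map_smul (f.symm 1) 1).symm
  refine ⟨⟨f 1, f.symm 1, hunit, by rw [mul_comm, hunit]⟩, LinearEquiv.toLinearMap_injective ?_⟩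
  exact LinearMap.ext_ring (by simp [LinearEquiv.smulOfUnit])

theorem LinearMap.rTensor_mulLeft {R A B : Type*} [CommSemiring R] [Semiring A] [Algebra R A]
    [Semiring B] [Algebra R B] (a : A) :
    (LinearMap.mulLeft R a).rTensor B = LinearMap.mulLeft R (a ⊗ₜ[R] (1 : B)) := by
  rw [LinearMap.mulLeft_tmul, LinearMap.mulLeft_one]
  rfl

namespace ComodAlg

variable {k H A : Type u} [CommRing k] [CommRing H] [Bialgebra k H]
  [CommRing A] [Algebra k A] (c : ComodAlg k H A)

theorem eq_d_iff (X : A ⊗[k] H) (a : Aˣ) :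
    X = c.d a ↔ ((a : A) ⊗ₜ[k] (1 : H)) * X = c.ρ a := by
  let a' : (A ⊗[k] H)ˣ := Units.map (Algebra.TensorProduct.includeLeft : A →ₐ[k] A ⊗[k] H) a
  exact Units.eq_inv_mul_iff_mul_eq a'

theorem colinear_smulOfUnit_iff (X : A ⊗[k] H) (a : Aˣ) :
    (∀ b : A, c.ρ (LinearEquiv.smulOfUnit a b) =
        LinearMap.rTensor H
          (((LinearEquiv.smulOfUnit a : A ≃ₗ[A] A) : A →ₗ[A] A).restrictScalars k) (X * c.ρ b)) ↔
      X = c.d a := by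
  have hmul : ((LinearEquiv.smulOfUnit a : A ≃ₗ[A] A) : A →ₗ[A] A).restrictScalars k =
      LinearMap.mulLeft k (a : A) := rfl
  have happly (b : A) : LinearEquiv.smulOfUnit a b = a * b := rfl
  simp only [hmul, LinearMap.rTensor_mulLeft, LinearMap.mulLeft_apply, happly, c.eq_d_iff]
  refine ⟨fun h => by simpa using (h 1).symm, fun h b => ?_⟩
  rw [map_mul, ← h, mul_assoc]

end ComodAlg

theorem AX_trivial_iff_in_image_of_d
    {k H A : Type u} [CommRing k] [CommRing H] [Bialgebra k H]
    [CommRing A] [Algebra k A] (c : ComodAlg k H A) (X : (A ⊗[k] H)ˣ) :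
    (∃ f : A ≃ₗ[A] A, ∀ a : A,
        c.ρ (f a) =
          (LinearMap.rTensor H ((f : A →ₗ[A] A).restrictScalars k)) ((↑X : A ⊗[k] H) * c.ρ a))
      ↔ ∃ a : Aˣ, (↑X : A ⊗[k] H) = c.d a := by
  rw [LinearEquiv.smulOfUnit_surjective.exists]
  exact exists_congr (c.colinear_smulOfUnit_iff X)
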